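/- Let L be a commutative local principal ideal ring with maximal ideal pL and residue field of size p. Let A ∈ L^{m×n}, Q ∈ L^{n×k} with k ≤ min(m,n), and suppose S_k(AQ) ≠ S_k(A), i.e. the first k invariant factors of AQ differ from those of A. If y ∈ L^n is chosen with independent uniformly random entries, then the probability that S_k([AQ | Ay]) = S_k(AQ) is at most 1/p. -/

import Mathlib

/-!
Bring `A` to Smith normal form `U A V = diag(d₀, d₁, …)` with `d₀ ∣ d₁ ∣ ⋯`; it exists over a
local Bézout ring because divisibility there is total. Let `i + 1` be the first index at which
the determinantal ideals of `A Q` and `A` differ. Then `Iᵢ(A Q) = (d₀ ⋯ dᵢ₋₁)` is generated by a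
single `i`-minor of `A Q`; bordering it by a row `r ≤ i` that it does not use and by the column
`A (V eᵣ) = U⁻¹ dᵣ eᵣ` gives an `(i + 1)`-minor of `[A Q | A y₀]` dividing `d₀ ⋯ dᵢ`, the
generator of `Iᵢ₊₁(A) ⊋ Iᵢ₊₁(A Q)`.

A minor of `[A Q | A y]` through the last column is a linear form `φ y`, with `φ y ∈ Iᵢ₊₁(A Q)`
for every good `y` and, for a suitable such minor, `φ y₀ ∉ Iᵢ₊₁(A Q)`. If two good vectors differ
by `c • y₀`, then `c * φ y₀ ∈ Iᵢ₊₁(A Q)`, so `c` is not a unit. Hence the translates of the good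
set by `c • y₀`, with `c` running over representatives of the `p` residue classes, are pairwise
disjoint.
-/

open Matrix

/-- The ideal generated by all `i×i` minors of a rectangular matrix: the
`i`-th determinantal divisor ideal.  Over a local PIR, two matrices have the
same first `k` invariant factors iff these ideals agree for all `i ≤ k`. -/
def minorsIdeal {L : Type*} [CommRing L] {m n : ℕ} (i : ℕ)
    (A : Matrix (Fin m) (Fin n) L) : Ideal L :=
  Ideal.span { x | ∃ σ : Fin i → Fin m, ∃ τ : Fin i → Fin n,
    StrictMono σ ∧ StrictMono τ ∧ x = (A.submatrix σ τ).det }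

/-- The matrix `[M | v]` obtained by adjoining the column `v`. -/
def appendCol {L : Type*} [CommRing L] {m k : ℕ}
    (M : Matrix (Fin m) (Fin k) L) (v : Fin m → L) :
    Matrix (Fin m) (Fin (k + 1)) L :=
  Matrix.of fun i j => if h : j.val < k then M i ⟨j.val, h⟩ else v i

section Divisibility
variable {R : Type*} [CommRing R]

theorem IsLocalRing.dvd_total [IsLocalRing R] [IsBezout R] (a b : R) : a ∣ b ∨ b ∣ a := by
  obtain ⟨g, hg⟩ := (IsBezout.span_pair_isPrincipal a b).principal
  replace hg : Ideal.span {a, b} = Ideal.span {g} := hg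
  have hmem : ∀ x ∈ ({a, b} : Set R), ∃ x', x' * g = x := fun x hx =>
    Ideal.mem_span_singleton'.mp (hg ▸ Ideal.subset_span hx)
  obtain ⟨a', rfl⟩ := hmem a (by simp)
  obtain ⟨b', rfl⟩ := hmem b (by simp)
  obtain ⟨x, y, hxy⟩ := Ideal.mem_span_pair.mp (hg ▸ Ideal.mem_span_singleton_self g :
    g ∈ Ideal.span {a' * g, b' * g})
  by_cases hu : IsUnit (x * a' + y * b')
  · rcases IsLocalRing.isUnit_or_isUnit_of_isUnit_add hu with h | h
    · exact .inl (mul_dvd_mul_right (isUnit_iff_forall_dvd.mp (isUnit_of_mul_isUnit_right h) _) _)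
    · exact .inr (mul_dvd_mul_right (isUnit_iff_forall_dvd.mp (isUnit_of_mul_isUnit_right h) _) _)
  · -- `g * (1 - (x a' + y b')) = 0` and the second factor is a unit
    have hg0 : g = 0 := by
      refine ((IsLocalRing.isUnit_or_isUnit_one_sub_self _).resolve_left hu).mul_left_eq_zero.mp ?_
      linear_combination -hxy
    simp [hg0]

theorem Set.Finite.exists_dvd_forall (htot : ∀ a b : R, a ∣ b ∨ b ∣ a) {S : Set R}
    (hS : S.Finite) (hne : S.Nonempty) : ∃ g ∈ S, ∀ x ∈ S, g ∣ x := by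
  induction S, hS using Set.Finite.induction_on with
  | empty => exact absurd hne Set.not_nonempty_empty
  | @insert a s _ _ ih =>
    rcases s.eq_empty_or_nonempty with rfl | hs
    · exact ⟨a, by simp⟩
    obtain ⟨g, hg, hgs⟩ := ih hs
    rcases htot a g with h | h
    · exact ⟨a, s.mem_insert a, Set.forall_mem_insert.2 ⟨dvd_rfl, fun x hx => h.trans (hgs x hx)⟩⟩
    · exact ⟨g, s.mem_insert_of_mem a hg, Set.forall_mem_insert.2 ⟨h, hgs⟩⟩

theorem Matrix.dvd_mul_mul_apply {l m n o : Type*} [Fintype m] [Fintype n] {a : R}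
    {B : Matrix m n R} (hB : ∀ r c, a ∣ B r c) (U : Matrix l m R) (V : Matrix n o R) (r : l)
    (c : o) : a ∣ (U * B * V) r c := by
  choose B' hB' using hB
  have : B = a • Matrix.of B' := by ext r c; exact hB' r c
  rw [this, Matrix.mul_smul, Matrix.smul_mul]
  exact dvd_mul_right _ _

theorem Matrix.prod_dvd_det_of_dvd_col {ι : Type*} [Fintype ι] [DecidableEq ι]
    {M : Matrix ι ι R} {c : ι → R} (h : ∀ r j, c j ∣ M r j) : ∏ j, c j ∣ M.det := by
  rw [Matrix.det_apply']
  exact Finset.dvd_sum fun π _ =>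
    dvd_mul_of_dvd_right (Finset.prod_dvd_prod_of_dvd _ _ fun j _ => h _ j) _

end Divisibility

section Minors
variable {L : Type*} [CommRing L] {m n i : ℕ}

theorem det_submatrix_mem_minorsIdeal (A : Matrix (Fin m) (Fin n) L) (σ : Fin i → Fin m)
    (τ : Fin i → Fin n) : (A.submatrix σ τ).det ∈ minorsIdeal i A := by
  by_cases hσ : σ.Injective
  swap
  · obtain ⟨a, b, hab, hne⟩ := Function.not_injective_iff.mp hσ
    rw [det_zero_of_row_eq hne (funext fun j => by simp [hab])]
    exact zero_mem _
  by_cases hτ : τ.Injective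
  swap
  · obtain ⟨a, b, hab, hne⟩ := Function.not_injective_iff.mp hτ
    rw [det_zero_of_column_eq hne fun j => by simp [hab]]
    exact zero_mem _
  -- reorder rows and columns increasingly, at the cost of two signs
  set e := Tuple.sort σ
  set f := Tuple.sort τ
  have hsorted : ((A.submatrix (σ ∘ e) (τ ∘ f)).submatrix e.symm id).submatrix id f.symm =
      A.submatrix σ τ := by
    ext; simp
  rw [← hsorted, det_permute', det_permute]
  refine Ideal.mul_mem_left _ _ (Ideal.mul_mem_left _ _ (Ideal.subset_span ⟨_, _,
    (Tuple.monotone_sort σ).strictMono_of_injective (hσ.comp e.injective),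
    (Tuple.monotone_sort τ).strictMono_of_injective (hτ.comp f.injective), rfl⟩))

theorem minorsIdeal_zero (A : Matrix (Fin m) (Fin n) L) : minorsIdeal 0 A = ⊤ :=
  (Ideal.eq_top_iff_one _).2
    (by simpa using det_submatrix_mem_minorsIdeal A finZeroElim finZeroElim)

theorem minorsIdeal_transpose (A : Matrix (Fin m) (Fin n) L) :
    minorsIdeal i Aᵀ = minorsIdeal i A := by
  refine le_antisymm ?_ ?_ <;> refine Ideal.span_le.2 ?_ <;> rintro _ ⟨σ, τ, -, -, rfl⟩
  · rw [← det_transpose, transpose_submatrix, transpose_transpose]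
    exact det_submatrix_mem_minorsIdeal A τ σ
  · rw [← det_transpose, transpose_submatrix]
    exact det_submatrix_mem_minorsIdeal Aᵀ τ σ

theorem det_mul_mem_span_det_submatrix {N : ℕ} (R : Matrix (Fin i) (Fin N) L)
    (C : Matrix (Fin N) (Fin i) L) :
    (R * C).det ∈ Ideal.span (Set.range fun ρ : Fin i → Fin N => (C.submatrix ρ id).det) := by
  have hrows : (R * C).det =
      (detRowAlternating : (Fin i → L) [⋀^Fin i]→ₗ[L] L) fun r => ∑ t, R r t • C t := by
    congr 1
    ext r c
    simp [Matrix.mul_apply]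
  rw [hrows, ← AlternatingMap.coe_multilinearMap, MultilinearMap.map_sum]
  refine Ideal.sum_mem _ fun ρ _ => ?_
  rw [MultilinearMap.map_smul_univ, smul_eq_mul]
  exact Ideal.mul_mem_left _ _ (Ideal.subset_span ⟨ρ, rfl⟩)

theorem minorsIdeal_mul_le_right {m' : ℕ} (U : Matrix (Fin m) (Fin m') L)
    (M : Matrix (Fin m') (Fin n) L) : minorsIdeal i (U * M) ≤ minorsIdeal i M := by
  refine Ideal.span_le.2 ?_
  rintro _ ⟨σ, τ, -, -, rfl⟩
  rw [submatrix_mul _ _ _ _ _ Function.bijective_id]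
  refine Ideal.span_le.2 ?_ (det_mul_mem_span_det_submatrix _ _)
  rintro _ ⟨ρ, rfl⟩
  simpa using det_submatrix_mem_minorsIdeal M ρ τ

theorem minorsIdeal_mul_le_left {n' : ℕ} (M : Matrix (Fin m) (Fin n) L)
    (V : Matrix (Fin n) (Fin n') L) : minorsIdeal i (M * V) ≤ minorsIdeal i M := by
  rw [← minorsIdeal_transpose, transpose_mul, ← minorsIdeal_transpose M]
  exact minorsIdeal_mul_le_right _ _

theorem minorsIdeal_isUnit_mul {U : Matrix (Fin m) (Fin m) L} (hU : IsUnit U)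
    (M : Matrix (Fin m) (Fin n) L) : minorsIdeal i (U * M) = minorsIdeal i M := by
  refine le_antisymm (minorsIdeal_mul_le_right _ _) ?_
  calc minorsIdeal i M = minorsIdeal i (U⁻¹ * (U * M)) := by
        rw [nonsing_inv_mul_cancel_left _ _ ((isUnit_iff_isUnit_det U).1 hU)]
    _ ≤ _ := minorsIdeal_mul_le_right _ _

theorem minorsIdeal_mul_isUnit {V : Matrix (Fin n) (Fin n) L} (hV : IsUnit V)
    (M : Matrix (Fin m) (Fin n) L) : minorsIdeal i (M * V) = minorsIdeal i M := by
  refine le_antisymm (minorsIdeal_mul_le_left _ _) ?_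
  calc minorsIdeal i M = minorsIdeal i (M * V * V⁻¹) := by
        rw [mul_nonsing_inv_cancel_right _ _ ((isUnit_iff_isUnit_det V).1 hV)]
    _ ≤ _ := minorsIdeal_mul_le_left _ _

end Minors

section RectDiagonal
variable {L : Type*} [CommRing L] {m n i : ℕ}

def rectDiagonal (m n : ℕ) (d : ℕ → L) : Matrix (Fin m) (Fin n) L :=
  Matrix.of fun r c => if (r : ℕ) = c then d r else 0

theorem Fin.val_le_val_of_strictMono {N : ℕ} {τ : Fin i → Fin N} (hτ : StrictMono τ)
    (t : Fin i) : (t : ℕ) ≤ τ t := by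
  obtain ⟨t, ht⟩ := t
  induction t with
  | zero => exact Nat.zero_le _
  | succ t ih =>
    have := hτ (show (⟨t, by omega⟩ : Fin i) < ⟨t + 1, ht⟩ from Fin.mk_lt_mk.2 t.lt_succ_self)
    exact (ih (by omega)).trans_lt this

theorem minorsIdeal_rectDiagonal {d : ℕ → L} (hd : ∀ j, d j ∣ d (j + 1)) (him : i ≤ m)
    (hin : i ≤ n) :
    minorsIdeal i (rectDiagonal m n d) = Ideal.span {∏ t ∈ Finset.range i, d t} := by
  refine le_antisymm (Ideal.span_le.2 ?_) ?_
  · rintro _ ⟨σ, τ, -, hτ, rfl⟩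
    -- column `j` of the minor is a multiple of `d (τ j)`, and `τ j ≥ j`
    refine Ideal.mem_span_singleton.2 (dvd_trans ?_ (prod_dvd_det_of_dvd_col (c := fun j => d (τ j))
      fun r j => ?_))
    · rw [← Fin.prod_univ_eq_prod_range]
      exact Finset.prod_dvd_prod_of_dvd _ _ fun j _ =>
        Nat.rel_of_forall_rel_succ_of_le (· ∣ ·) hd (Fin.val_le_val_of_strictMono hτ j)
    · simp only [rectDiagonal, submatrix_apply, of_apply]
      split_ifs with h
      · rw [h]
      · exact dvd_zero _
  · have : (rectDiagonal m n d).submatrix (Fin.castLE him) (Fin.castLE hin) =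
        diagonal fun t : Fin i => d t := by
      ext r c
      simp [rectDiagonal, diagonal_apply, Fin.val_inj]
    rw [Ideal.span_singleton_le_iff_mem, ← Fin.prod_univ_eq_prod_range, ← det_diagonal, ← this]
    exact det_submatrix_mem_minorsIdeal _ _ _

theorem rectDiagonal_mulVec_single_one (d : ℕ → L) {r : ℕ} (hrm : r < m) (hrn : r < n) :
    rectDiagonal m n d *ᵥ Pi.single ⟨r, hrn⟩ 1 = Pi.single ⟨r, hrm⟩ (d r) := by
  ext s
  simp +contextual [rectDiagonal, Pi.single_apply, Fin.ext_iff]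

end RectDiagonal

section SmithForm
variable {L : Type*} [CommRing L] {m n : ℕ}

/-- The block diagonal matrix `diag(a, B)`. -/
def diagCons (a : L) (B : Matrix (Fin m) (Fin n) L) : Matrix (Fin (m + 1)) (Fin (n + 1)) L :=
  Matrix.of (Fin.cons (Fin.cons a 0) fun r => Fin.cons 0 (B r))

@[simp] theorem diagCons_zero_zero (a : L) (B : Matrix (Fin m) (Fin n) L) :
    diagCons a B 0 0 = a := rfl

@[simp] theorem diagCons_zero_succ (a : L) (B : Matrix (Fin m) (Fin n) L) (c : Fin n) :
    diagCons a B 0 c.succ = 0 := rfl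

@[simp] theorem diagCons_succ_zero (a : L) (B : Matrix (Fin m) (Fin n) L) (r : Fin m) :
    diagCons a B r.succ 0 = 0 := rfl

@[simp] theorem diagCons_succ_succ (a : L) (B : Matrix (Fin m) (Fin n) L) (r : Fin m)
    (c : Fin n) : diagCons a B r.succ c.succ = B r c := rfl

theorem diagCons_mul_diagCons {o : ℕ} (a b : L) (B : Matrix (Fin m) (Fin n) L)
    (C : Matrix (Fin n) (Fin o) L) : diagCons a B * diagCons b C = diagCons (a * b) (B * C) := by
  ext r c
  cases r using Fin.cases <;> cases c using Fin.cases <;> simp [Matrix.mul_apply, Fin.sum_univ_succ]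

theorem diagCons_one_one : diagCons (1 : L) (1 : Matrix (Fin m) (Fin m) L) = 1 := by
  ext r c
  cases r using Fin.cases <;> cases c using Fin.cases <;>
    simp [Matrix.one_apply, eq_comm (a := (0 : Fin (m + 1)))]

theorem IsUnit.diagCons_one {U : Matrix (Fin m) (Fin m) L} (hU : IsUnit U) :
    IsUnit (diagCons 1 U) := by
  obtain ⟨u, rfl⟩ := hU
  exact ⟨⟨diagCons 1 u, diagCons 1 ↑u⁻¹, by simp [diagCons_mul_diagCons, diagCons_one_one],
    by simp [diagCons_mul_diagCons, diagCons_one_one]⟩, rfl⟩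

theorem diagCons_rectDiagonal (a : L) (d : ℕ → L) :
    diagCons a (rectDiagonal m n d) = rectDiagonal (m + 1) (n + 1) fun j => Nat.casesOn j a d := by
  ext r c
  cases r using Fin.cases <;> cases c using Fin.cases <;> simp [rectDiagonal]

def HasSmithForm (A : Matrix (Fin m) (Fin n) L) : Prop :=
  ∃ (U : Matrix (Fin m) (Fin m) L) (V : Matrix (Fin n) (Fin n) L) (d : ℕ → L),
    IsUnit U ∧ IsUnit V ∧ (∀ j, d j ∣ d (j + 1)) ∧ (∀ j, min m n ≤ j → d j = 0) ∧
      U * A * V = rectDiagonal m n d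

theorem HasSmithForm.of_isUnit_mul_mul {A : Matrix (Fin m) (Fin n) L}
    {U : Matrix (Fin m) (Fin m) L} {V : Matrix (Fin n) (Fin n) L} (hU : IsUnit U) (hV : IsUnit V)
    (h : HasSmithForm (U * A * V)) : HasSmithForm A := by
  obtain ⟨U', V', d, hU', hV', hd, hd0, h⟩ := h
  refine ⟨U' * U, V * V', d, hU'.mul hU, hV.mul hV', hd, hd0, ?_⟩
  simpa only [Matrix.mul_assoc] using h

theorem hasSmithForm_of_min_eq_zero (h : min m n = 0) (A : Matrix (Fin m) (Fin n) L) :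
    HasSmithForm A := by
  refine ⟨1, 1, 0, isUnit_one, isUnit_one, fun _ => dvd_rfl, fun _ _ => rfl, ?_⟩
  ext r c
  have := r.isLt
  have := c.isLt
  omega

theorem hasSmithForm_diagCons {a : L} {B : Matrix (Fin m) (Fin n) L} (ha : ∀ r c, a ∣ B r c)
    (h : HasSmithForm B) : HasSmithForm (diagCons a B) := by
  obtain ⟨U, V, d, hU, hV, hd, hd0, h⟩ := h
  refine ⟨diagCons 1 U, diagCons 1 V, fun j => Nat.casesOn j a d, hU.diagCons_one,
    hV.diagCons_one, fun j => ?_, fun j hj => ?_, ?_⟩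
  · cases j with
    | succ j => exact hd j
    | zero =>
      -- `d 0` is either an entry of `U * B * V` or zero
      by_cases h0 : 0 < min m n
      · have := dvd_mul_mul_apply ha U V ⟨0, by omega⟩ ⟨0, by omega⟩
        simpa [h, rectDiagonal] using this
      · simp [hd0 0 (by omega)]
  · cases j with
    | zero => omega
    | succ j => exact hd0 j (by omega)
  · rw [diagCons_mul_diagCons, diagCons_mul_diagCons, h, one_mul, mul_one, diagCons_rectDiagonal]

theorem exists_isUnit_mul_mul_dvd [IsLocalRing L] [IsBezout L]
    (A : Matrix (Fin (m + 1)) (Fin (n + 1)) L) :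
    ∃ (U : Matrix (Fin (m + 1)) (Fin (m + 1)) L) (V : Matrix (Fin (n + 1)) (Fin (n + 1)) L),
      IsUnit U ∧ IsUnit V ∧ ∀ r c, (U * A * V) 0 0 ∣ (U * A * V) r c := by
  obtain ⟨_, ⟨⟨r₀, c₀⟩, rfl⟩, hg⟩ := (Set.finite_range fun rc : Fin (m + 1) × Fin (n + 1) =>
    A rc.1 rc.2).exists_dvd_forall IsLocalRing.dvd_total (Set.range_nonempty _)
  refine ⟨swap L 0 r₀, swap L 0 c₀, (GeneralLinearGroup.swap L 0 r₀).isUnit,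
    (GeneralLinearGroup.swap L 0 c₀).isUnit, fun r c => ?_⟩
  rw [mul_swap_apply_left, swap_mul_apply_left]
  exact dvd_mul_mul_apply (fun r c => hg _ ⟨(r, c), rfl⟩) _ _ r c

theorem isUnit_one_sub_vecMulVec {ι : Type*} [Fintype ι] [DecidableEq ι] {u v : ι → L}
    (h : v ⬝ᵥ u = 0) : IsUnit (1 - vecMulVec u v) := by
  have hsq : vecMulVec u v * vecMulVec u v = 0 := by simp [vecMulVec_mul_vecMulVec, h]
  refine ⟨⟨1 - vecMulVec u v, 1 + vecMulVec u v, ?_, ?_⟩, rfl⟩ <;>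
    simp only [sub_mul, mul_add, mul_sub, add_mul, one_mul, mul_one, hsq] <;> abel

theorem exists_isUnit_mul_mul_eq_diagCons {A : Matrix (Fin (m + 1)) (Fin (n + 1)) L}
    (hA : ∀ r c, A 0 0 ∣ A r c) :
    ∃ (U : Matrix (Fin (m + 1)) (Fin (m + 1)) L) (V : Matrix (Fin (n + 1)) (Fin (n + 1)) L)
      (B : Matrix (Fin m) (Fin n) L), IsUnit U ∧ IsUnit V ∧ U * A * V = diagCons (A 0 0) B := by
  choose q hq using fun r : Fin m => hA r.succ 0
  choose p hp using fun c : Fin n => hA 0 c.succ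
  set U : Matrix (Fin (m + 1)) (Fin (m + 1)) L :=
    1 - vecMulVec (Fin.cons 0 q) (Pi.single 0 1 : Fin (m + 1) → L)
  set V : Matrix (Fin (n + 1)) (Fin (n + 1)) L :=
    1 - vecMulVec (Pi.single 0 1 : Fin (n + 1) → L) (Fin.cons 0 p)
  have hUA : ∀ r c, (U * A) r c = A r c - (Fin.cons 0 q : Fin (m + 1) → L) r * A 0 c := by
    intro r c
    simp only [U, Matrix.sub_mul, Matrix.one_mul, vecMulVec_mul, single_one_vecMul,
      Matrix.sub_apply, vecMulVec_apply, row_apply]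
  have hUAV : ∀ r c,
      (U * A * V) r c = (U * A) r c - (U * A) r 0 * (Fin.cons 0 p : Fin (n + 1) → L) c := by
    intro r c
    simp only [V, Matrix.mul_sub, Matrix.mul_one, mul_vecMulVec, mulVec_single_one,
      Matrix.sub_apply, vecMulVec_apply, col_apply]
  refine ⟨U, V, Matrix.of fun r c => (U * A * V) r.succ c.succ, isUnit_one_sub_vecMulVec (by simp),
    isUnit_one_sub_vecMulVec (by simp), ?_⟩
  ext r c
  cases r using Fin.cases <;> cases c using Fin.cases <;> simp [hUAV, hUA, hq, hp, mul_comm]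

theorem hasSmithForm [IsLocalRing L] [IsBezout L] :
    ∀ {m n : ℕ} (A : Matrix (Fin m) (Fin n) L), HasSmithForm A
  | 0, _, A => hasSmithForm_of_min_eq_zero (by simp) A
  | _ + 1, 0, A => hasSmithForm_of_min_eq_zero (by simp) A
  | _ + 1, _ + 1, A => by
    obtain ⟨U, V, hU, hV, hpiv⟩ := exists_isUnit_mul_mul_dvd A
    obtain ⟨U', V', B, hU', hV', hB⟩ := exists_isUnit_mul_mul_eq_diagCons hpiv
    refine .of_isUnit_mul_mul (hU'.mul hU) (hV.mul hV') ?_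
    rw [show U' * U * A * (V * V') = U' * (U * A * V) * V' by simp only [Matrix.mul_assoc], hB]
    refine hasSmithForm_diagCons (fun r c => ?_) (hasSmithForm B)
    simpa [hB] using dvd_mul_mul_apply hpiv U' V' r.succ c.succ

end SmithForm

section AppendCol
variable {L : Type*} [CommRing L] {m n k i : ℕ}

@[simp] theorem appendCol_castSucc (M : Matrix (Fin m) (Fin k) L) (v : Fin m → L) (r : Fin m)
    (c : Fin k) : appendCol M v r c.castSucc = M r c := by
  simp [appendCol]

@[simp] theorem appendCol_last (M : Matrix (Fin m) (Fin k) L) (v : Fin m → L) (r : Fin m) :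
    appendCol M v r (Fin.last k) = v r := by
  simp [appendCol]

theorem appendCol_of_ne_last (M : Matrix (Fin m) (Fin k) L) (v : Fin m → L) (r : Fin m)
    {c : Fin (k + 1)} (hc : c ≠ Fin.last k) : appendCol M v r c = M r (c.castPred hc) := by
  rw [← appendCol_castSucc M v, Fin.castSucc_castPred]

theorem mul_appendCol {m' : ℕ} (U : Matrix (Fin m') (Fin m) L) (M : Matrix (Fin m) (Fin k) L)
    (v : Fin m → L) : U * appendCol M v = appendCol (U * M) (U *ᵥ v) := by
  ext r j
  cases j using Fin.lastCases <;> simp [Matrix.mul_apply, mulVec, dotProduct]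

theorem exists_det_submatrix_appendCol_notMem {M : Matrix (Fin m) (Fin k) L} {v : Fin m → L}
    (h : ¬ minorsIdeal i (appendCol M v) ≤ minorsIdeal i M) :
    ∃ (σ : Fin i → Fin m) (τ : Fin i → Fin (k + 1)) (t₀ : Fin i), τ.Injective ∧
      τ t₀ = Fin.last k ∧ ((appendCol M v).submatrix σ τ).det ∉ minorsIdeal i M := by
  rw [minorsIdeal, Ideal.span_le, Set.not_subset] at h
  obtain ⟨_, ⟨σ, τ, -, hτ, rfl⟩, hnot⟩ := h
  refine ⟨σ, τ, ?_⟩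
  by_contra! hlast
  have hne : ∀ t, τ t ≠ Fin.last k := fun t h => hnot (hlast t hτ.injective h)
  have : (appendCol M v).submatrix σ τ = M.submatrix σ fun t => (τ t).castPred (hne t) := by
    ext s t
    exact appendCol_of_ne_last M v _ (hne t)
  exact hnot (this ▸ det_submatrix_mem_minorsIdeal M σ _)

theorem exists_linearMap_eq_det_submatrix_appendCol (M : Matrix (Fin m) (Fin k) L)
    (σ : Fin i → Fin m) {τ : Fin i → Fin (k + 1)} (hτ : τ.Injective) {t₀ : Fin i}
    (ht₀ : τ t₀ = Fin.last k) :
    ∃ φ : (Fin m → L) →ₗ[L] L, ∀ v, φ v = ((appendCol M v).submatrix σ τ).det := by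
  set N := (appendCol M 0).submatrix σ τ
  have hN : ∀ v, (appendCol M v).submatrix σ τ = N.updateCol t₀ (v ∘ σ) := by
    intro v
    ext s t
    by_cases ht : t = t₀
    · simp [ht, ht₀]
    · have hne : τ t ≠ Fin.last k := ht₀ ▸ hτ.ne ht
      simp [N, ht, appendCol_of_ne_last _ _ _ hne]
  refine ⟨{ toFun := fun v => (N.updateCol t₀ (v ∘ σ)).det
            map_add' := fun v w => det_updateCol_add N t₀ (v ∘ σ) (w ∘ σ)
            map_smul' := fun c v => det_updateCol_smul N t₀ c (v ∘ σ) }, fun v => ?_⟩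
  simp [hN]

end AppendCol

section Bordering
variable {L : Type*} [CommRing L] {m n k i : ℕ}

theorem mul_det_submatrix_mem_minorsIdeal_appendCol_single (M : Matrix (Fin m) (Fin k) L)
    (ρ : Fin i → Fin m) (θ : Fin i → Fin k) {r₀ : Fin m} (hr₀ : r₀ ∉ Set.range ρ) (c : L) :
    c * (M.submatrix ρ θ).det ∈ minorsIdeal (i + 1) (appendCol M (Pi.single r₀ c)) := by
  have hborder : ((appendCol M (Pi.single r₀ c)).submatrix (Fin.cons r₀ ρ)
      (Fin.cons (Fin.last k) (Fin.castSucc ∘ θ))).det = c * (M.submatrix ρ θ).det := by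
    rw [det_succ_column_zero, Fin.sum_univ_succ, Finset.sum_eq_zero fun j _ => ?_]
    · have hM : (appendCol M (Pi.single r₀ c)).submatrix ρ (Fin.castSucc ∘ θ) =
          M.submatrix ρ θ := by
        ext
        simp
      simpa [submatrix_submatrix, Function.comp_def] using congrArg (fun N => c * N.det) hM
    · have : ρ j ≠ r₀ := fun h => hr₀ ⟨j, h⟩
      simp [this]
  exact hborder ▸ det_submatrix_mem_minorsIdeal _ _ _

theorem exists_prod_mem_minorsIdeal_appendCol_mulVec [IsLocalRing L] [IsBezout L] {d : ℕ → L}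
    (hd : ∀ j, d j ∣ d (j + 1)) (M : Matrix (Fin m) (Fin k) L) (him : i < m) (hin : i < n)
    (hik : i ≤ k) (h : ∏ t ∈ Finset.range i, d t ∈ minorsIdeal i M) :
    ∃ y : Fin n → L, ∏ t ∈ Finset.range (i + 1), d t ∈
      minorsIdeal (i + 1) (appendCol M (rectDiagonal m n d *ᵥ y)) := by
  -- since divisibility is total, a single minor generates `minorsIdeal i M`
  obtain ⟨_, ⟨⟨ρ, θ⟩, rfl⟩, hg⟩ := (Set.finite_range fun στ : (Fin i → Fin m) × (Fin i → Fin k) =>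
    (M.submatrix στ.1 στ.2).det).exists_dvd_forall IsLocalRing.dvd_total
    ⟨_, (Fin.castLE him.le, Fin.castLE hik), rfl⟩
  have hgen : minorsIdeal i M ≤ Ideal.span {(M.submatrix ρ θ).det} :=
    Ideal.span_le.2 fun _ ⟨σ, τ, _, _, hx⟩ => Ideal.mem_span_singleton.2 (hx ▸ hg _ ⟨(σ, τ), rfl⟩)
  obtain ⟨x, hx⟩ := Ideal.mem_span_singleton.1 (hgen h)
  obtain ⟨r₀, hr₀, hr₀ρ⟩ := Finset.exists_mem_notMem_of_card_lt_card
    (α := ℕ) (s := Finset.univ.image fun t => (ρ t : ℕ)) (t := Finset.range (i + 1))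
    (Finset.card_image_le.trans_lt (by simp))
  rw [Finset.mem_range] at hr₀
  refine ⟨Pi.single ⟨r₀, by omega⟩ 1, ?_⟩
  rw [rectDiagonal_mulVec_single_one d (by omega) (by omega)]
  have hmem := mul_det_submatrix_mem_minorsIdeal_appendCol_single M ρ θ (r₀ := ⟨r₀, by omega⟩)
    (by rintro ⟨t, ht⟩; exact hr₀ρ (Finset.mem_image.2 ⟨t, Finset.mem_univ _, by simp [ht]⟩))
    (d r₀)
  obtain ⟨z, hz⟩ := Nat.rel_of_forall_rel_succ_of_le (· ∣ ·) hd (Nat.lt_succ_iff.1 hr₀)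
  rw [Finset.prod_range_succ, hx, hz]
  convert Ideal.mul_mem_left _ (x * z) hmem using 1
  ring

end Bordering

theorem Nat.exists_lt_and_not_succ {P : ℕ → Prop} (h0 : P 0) {n : ℕ} (hn : ¬ P n) :
    ∃ i < n, P i ∧ ¬ P (i + 1) := by
  induction n with
  | zero => exact absurd h0 hn
  | succ n ih =>
    by_cases hPn : P n
    · exact ⟨n, n.lt_succ_self, hPn, hn⟩
    · obtain ⟨i, hi, h⟩ := ih hPn
      exact ⟨i, by omega, h⟩

section Main
variable {L : Type*} [CommRing L] [IsLocalRing L]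

theorem exists_not_minorsIdeal_appendCol_mulVec_le [IsBezout L] {m n k : ℕ} (hkm : k ≤ m)
    (hkn : k ≤ n) (A : Matrix (Fin m) (Fin n) L) (Q : Matrix (Fin n) (Fin k) L)
    (hdiff : ¬ ∀ i ≤ k, minorsIdeal i (A * Q) = minorsIdeal i A) :
    ∃ y i, i ≤ k ∧ ¬ minorsIdeal i (appendCol (A * Q) (A *ᵥ y)) ≤ minorsIdeal i (A * Q) := by
  obtain ⟨U, V, d, hU, hV, hd, -, hUAV⟩ := hasSmithForm A
  set D := rectDiagonal m n d
  set G := V⁻¹ * Q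
  have hA : A = U⁻¹ * D * V⁻¹ := by
    rw [← hUAV, ← Matrix.mul_assoc, ← Matrix.mul_assoc,
      nonsing_inv_mul _ ((isUnit_iff_isUnit_det U).1 hU), Matrix.one_mul,
      mul_nonsing_inv_cancel_right _ _ ((isUnit_iff_isUnit_det V).1 hV)]
  have hAQ : A * Q = U⁻¹ * (D * G) := by rw [hA]; simp only [G, Matrix.mul_assoc]
  have hIAQ : ∀ j, minorsIdeal j (A * Q) = minorsIdeal j (D * G) := fun j => by
    rw [hAQ, minorsIdeal_isUnit_mul (isUnit_nonsing_inv_iff.2 hU)]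
  have hiff : ∀ j ≤ k, minorsIdeal j (A * Q) = minorsIdeal j A ↔
      ∏ t ∈ Finset.range j, d t ∈ minorsIdeal j (D * G) := by
    intro j hj
    have hID : minorsIdeal j D = Ideal.span {∏ t ∈ Finset.range j, d t} :=
      minorsIdeal_rectDiagonal hd (by omega) (by omega)
    rw [hIAQ, hA, minorsIdeal_mul_isUnit (isUnit_nonsing_inv_iff.2 hV),
      minorsIdeal_isUnit_mul (isUnit_nonsing_inv_iff.2 hU), hID,
      ← Ideal.span_singleton_le_iff_mem]
    exact ⟨fun h => h.ge, le_antisymm ((minorsIdeal_mul_le_left D G).trans hID.le)⟩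
  push Not at hdiff
  obtain ⟨j, hjk, hj⟩ := hdiff
  obtain ⟨i, hij, hi, hi₁⟩ := Nat.exists_lt_and_not_succ
    (P := fun j => ∏ t ∈ Finset.range j, d t ∈ minorsIdeal j (D * G)) (by simp [minorsIdeal_zero])
    (mt (hiff j hjk).2 hj)
  obtain ⟨y, hy⟩ := exists_prod_mem_minorsIdeal_appendCol_mulVec (n := n) hd (D * G)
    (by omega) (by omega) (by omega) hi
  have happ : appendCol (A * Q) (A *ᵥ (V *ᵥ y)) = U⁻¹ * appendCol (D * G) (D *ᵥ y) := by
    rw [mul_appendCol, ← hAQ, mulVec_mulVec, mulVec_mulVec, hA,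
      nonsing_inv_mul_cancel_right _ _ ((isUnit_iff_isUnit_det V).1 hV)]
  refine ⟨V *ᵥ y, i + 1, by omega, fun hle => hi₁ ?_⟩
  rw [← hIAQ]
  exact hle (by rwa [happ, minorsIdeal_isUnit_mul (isUnit_nonsing_inv_iff.2 hU)])

theorem card_residueField_mul_card_comap_le {V : Type*} [AddCommGroup V] [Module L V] [Finite V]
    (φ : V →ₗ[L] L) (I : Ideal L) {v₀ : V} (hv₀ : φ v₀ ∉ I) :
    Nat.card (IsLocalRing.ResidueField L) * Nat.card (Submodule.comap φ I) ≤ Nat.card V := by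
  set rep := Function.surjInv (IsLocalRing.residue_surjective (R := L))
  have hrep : ∀ q, IsLocalRing.residue L (rep q) = q :=
    Function.surjInv_eq IsLocalRing.residue_surjective
  rw [← Nat.card_prod]
  -- the translates of `Submodule.comap φ I` by `c • v₀`, for distinct residues `c`, are disjoint
  refine Nat.card_le_card_of_injective (fun qw => qw.2 + rep qw.1 • v₀) ?_
  rintro ⟨q₁, w₁⟩ ⟨q₂, w₂⟩ h
  obtain rfl : q₁ = q₂ := by
    by_contra hne
    have hu : IsUnit (rep q₁ - rep q₂) := by
      rw [← IsLocalRing.residue_ne_zero_iff_isUnit, map_sub, hrep, hrep]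
      exact sub_ne_zero.2 hne
    refine hv₀ ((Ideal.unit_mul_mem_iff_mem I hu).1 ?_)
    have hsmul : (rep q₁ - rep q₂) • v₀ = w₂ - w₁ := by
      rw [sub_smul]
      linear_combination (norm := module) h
    rw [← smul_eq_mul, ← map_smul, hsmul, map_sub]
    exact I.sub_mem w₂.2 w₁.2
  simpa using h

end Main

theorem prob_append_agrees_general {L : Type*} [CommRing L] [IsLocalRing L]
    [IsPrincipalIdealRing L] [Fintype L] (p : ℕ)
    (hres : Nat.card (IsLocalRing.ResidueField L) = p)
    {m n k : ℕ} (hkm : k ≤ m) (hkn : k ≤ n)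
    (A : Matrix (Fin m) (Fin n) L) (Q : Matrix (Fin n) (Fin k) L)
    (hdiff : ¬ (∀ i ≤ k, minorsIdeal i (A * Q) = minorsIdeal i A)) :
    p * Nat.card {y : Fin n → L //
        ∀ i ≤ k, minorsIdeal i (appendCol (A * Q) (A.mulVec y)) =
          minorsIdeal i (A * Q)} ≤
      Nat.card (Fin n → L) := by
  obtain ⟨y₀, i, hik, hy₀⟩ := exists_not_minorsIdeal_appendCol_mulVec_le hkm hkn A Q hdiff
  obtain ⟨σ, τ, t₀, hτ, ht₀, hnot⟩ := exists_det_submatrix_appendCol_notMem hy₀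
  obtain ⟨φ, hφ⟩ := exists_linearMap_eq_det_submatrix_appendCol (A * Q) σ hτ ht₀
  set ψ := φ ∘ₗ A.mulVecLin
  set I := minorsIdeal i (A * Q)
  have hgood : ∀ y : Fin n → L, (∀ i ≤ k,
      minorsIdeal i (appendCol (A * Q) (A.mulVec y)) = minorsIdeal i (A * Q)) → ψ y ∈ I :=
    fun y hy => by
      simpa [ψ, hφ, I, hy i hik] using
        det_submatrix_mem_minorsIdeal (appendCol (A * Q) (A *ᵥ y)) σ τ
  rw [← hres]
  refine (Nat.mul_le_mul_left _ (Nat.card_le_card_of_injective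
    (fun y => (⟨y.1, hgood y.1 y.2⟩ : Submodule.comap ψ I)) fun _ _ h => ?_)).trans
    (card_residueField_mul_card_comap_le ψ I (by simpa [ψ, hφ] using hnot))
  simpa [Subtype.ext_iff] using h

/-- Over a finite local PIR `L` with residue field of `p` elements:
if the first `k` invariant factors of `AQ` differ from those of `A`
(equivalently, some determinantal divisor ideal differs), then for a uniformly
random `y ∈ Lⁿ`, `S_k([AQ | Ay]) = S_k(AQ)` with probability at most `1/p`. -/
theorem prob_append_agrees {L : Type*} [CommRing L] [IsLocalRing L]
    [IsPrincipalIdealRing L] [Fintype L] (p : ℕ) (hp : p.Prime)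
    (hres : Nat.card (IsLocalRing.ResidueField L) = p)
    {m n k : ℕ} (hkm : k ≤ m) (hkn : k ≤ n)
    (A : Matrix (Fin m) (Fin n) L) (Q : Matrix (Fin n) (Fin k) L)
    (hdiff : ¬ (∀ i ≤ k, minorsIdeal i (A * Q) = minorsIdeal i A)) :
    p * Nat.card {y : Fin n → L //
        ∀ i ≤ k, minorsIdeal i (appendCol (A * Q) (A.mulVec y)) =
          minorsIdeal i (A * Q)} ≤
      Nat.card (Fin n → L) :=
  prob_append_agrees_general p hres hkm hkn A Q hdiff
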